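/- arXiv:1206.6970 — 7 statements merged into one kernel-verified Lean document; each statement's English description precedes it below -/
import Mathlib

section
/- Let A and B be unital C*-algebras, let ε_A ∈ A and ε_B ∈ B be grading operators (selfadjoint unitaries), and let φ : A → B be a unital ℂ-algebra homomorphism which is contractive (‖φ(x)‖ ≤ ‖x‖ for all x ∈ A) and preserves the superinvolutions, i.e. φ(ε_A x* ε_A) = ε_B φ(x)* ε_B for all x ∈ A, where * denotes the C*-involution. Then φ is a graded C*-representation: φ(x*) = φ(x)* for all x ∈ A, and φ(ε_A x ε_A) = ε_B φ(x) ε_B for all x ∈ A. (Lemma 1.) -/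
/-!
A unital contractive homomorphism `φ` maps selfadjoint elements to selfadjoint elements: for
selfadjoint `a` and real `t`, the imaginary part `k` of `φ a` satisfies
`‖k + t‖² ≤ ‖φ (a + i t)‖² ≤ ‖a‖² + t²`, so every `z` in the real spectrum of `k` obeys
`(z + t)² ≤ ‖a‖² + t²` for all `t`, which forces `z = 0` and hence `k = 0`. Writing `x = ℜ x + i ℑ x`
then shows that `φ` preserves `star`, and the grading identity is the superinvolution identity
applied to `star x`.
-/

open Complex ComplexStarModule

lemma eq_zero_of_forall_mul_le {c M : ℝ} (h : ∀ t, c * t ≤ M) : c = 0 := by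
  by_contra hc
  have := h ((|M| + 1) / c)
  rw [mul_div_cancel₀ _ hc] at this
  linarith [le_abs_self M]

lemma IsSelfAdjoint.eq_zero_of_forall_norm_add_algebraMap_sq_le {B : Type*} [CStarAlgebra B]
    {k : B} (hk : IsSelfAdjoint k) (M : ℝ)
    (h : ∀ t : ℝ, ‖k + algebraMap ℝ B t‖ ^ 2 ≤ M + t ^ 2) : k = 0 := by
  nontriviality B
  refine CFC.eq_zero_of_spectrum_subset_zero (R := ℝ) k fun z hz => ?_
  have hcoeff : 2 * z = 0 := eq_zero_of_forall_mul_le (M := M - z ^ 2) fun t => by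
    have hmem : z + t ∈ spectrum ℝ (k + algebraMap ℝ B t) := by
      rw [← spectrum.add_singleton_eq]; exact Set.add_mem_add hz rfl
    have hle := spectrum.norm_le_norm_of_mem hmem
    rw [Real.norm_eq_abs] at hle
    nlinarith [h t, sq_abs (z + t), abs_nonneg (z + t)]
  simpa using hcoeff

lemma IsSelfAdjoint.norm_add_I_smul_algebraMap_sq_le {A : Type*} [CStarAlgebra A]
    {a : A} (ha : IsSelfAdjoint a) (t : ℝ) :
    ‖a + I • algebraMap ℝ A t‖ ^ 2 ≤ ‖a‖ ^ 2 + t ^ 2 := by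
  rcases subsingleton_or_nontrivial A with hA | hA
  · simp [Subsingleton.elim _ (0 : A)]
    positivity
  set c : A := I • algebraMap ℝ A t
  have hc : star c = -c := by simp [c, star_smul, (IsSelfAdjoint.all t).algebraMap A |>.star_eq]
  have hcc : c * c = -algebraMap ℝ A (t ^ 2) := by
    simp only [c, smul_mul_smul_comm, ← map_mul, I_mul_I, neg_smul, one_smul, sq]
  have hcomm : Commute a c := (Algebra.commute_algebraMap_right t a).smul_right I
  calc ‖a + c‖ ^ 2 = ‖a * a + algebraMap ℝ A (t ^ 2)‖ := by
        rw [sq, ← CStarRing.norm_star_mul_self, star_add, ha.star_eq, hc, ← sub_eq_add_neg,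
          ← hcomm.mul_self_sub_mul_self_eq', hcc, sub_neg_eq_add]
    _ ≤ ‖a‖ ^ 2 + t ^ 2 := by
        grw [norm_add_le, norm_mul_le, norm_algebraMap', Real.norm_of_nonneg (sq_nonneg t), ← sq]

lemma map_star_of_map_isSelfAdjoint {E F : Type*} [AddCommGroup E] [Module ℂ E] [StarAddMonoid E]
    [StarModule ℂ E] [AddCommGroup F] [Module ℂ F] [StarAddMonoid F] [StarModule ℂ F]
    (f : E →ₗ[ℂ] F) (hf : ∀ a, IsSelfAdjoint a → IsSelfAdjoint (f a)) (x : E) :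
    f (star x) = star (f x) := by
  rw [← realPart_add_I_smul_imaginaryPart x]
  simp [star_smul, (hf _ (ℜ x).property).star_eq, (hf _ (ℑ x).property).star_eq]

lemma AlgHom.map_isSelfAdjoint_of_forall_norm_map_le {A B : Type*} [CStarAlgebra A]
    [CStarAlgebra B] (φ : A →ₐ[ℂ] B) (hφ : ∀ x, ‖φ x‖ ≤ ‖x‖) {a : A} (ha : IsSelfAdjoint a) :
    IsSelfAdjoint (φ a) := by
  rw [← imaginaryPart_eq_zero_iff, ← ZeroMemClass.coe_eq_zero]
  refine (ℑ (φ a)).property.eq_zero_of_forall_norm_add_algebraMap_sq_le (‖a‖ ^ 2) fun t => ?_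
  have him : (ℑ (φ a) : B) + algebraMap ℝ B t = ℑ (φ (a + I • algebraMap ℝ A t)) := by
    simp [imaginaryPart_I_smul, ((IsSelfAdjoint.all t).algebraMap B).coe_realPart]
  calc ‖(ℑ (φ a) : B) + algebraMap ℝ B t‖ ^ 2 ≤ ‖a + I • algebraMap ℝ A t‖ ^ 2 := by
        rw [him]; gcongr; exact (imaginaryPart.norm_le _).trans (hφ _)
    _ ≤ ‖a‖ ^ 2 + t ^ 2 := ha.norm_add_I_smul_algebraMap_sq_le t

theorem lemma1_contractive_superinvolutive_hom_is_graded_general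
    {A B : Type*} [CStarAlgebra A] [CStarAlgebra B]
    (εA : A) (εB : B)
    (φ : A →ₐ[ℂ] B)
    (hcontr : ∀ x : A, ‖φ x‖ ≤ ‖x‖)
    (hsuper : ∀ x : A, φ (εA * star x * εA) = εB * star (φ x) * εB) :
    (∀ x : A, φ (star x) = star (φ x)) ∧
    (∀ x : A, φ (εA * x * εA) = εB * φ x * εB) := by
  have hstar : ∀ x : A, φ (star x) = star (φ x) :=
    map_star_of_map_isSelfAdjoint φ.toLinearMap fun _ =>
      φ.map_isSelfAdjoint_of_forall_norm_map_le hcontr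
  refine ⟨hstar, fun x => ?_⟩
  simpa [hstar] using hsuper (star x)

/-- **Lemma 1.** Let `A` and `B` be unital C*-algebras, let `εA ∈ A` and `εB ∈ B` be
grading operators (selfadjoint unitaries), and let `φ : A → B` be a unital contractive
algebra homomorphism preserving the superinvolutions `x ↦ ε x* ε`.  Then `φ` is a graded
C*-representation: it preserves the C*-involution and intertwines the gradings. -/
theorem lemma1_contractive_superinvolutive_hom_is_graded
    {A B : Type*} [CStarAlgebra A] [CStarAlgebra B]
    (εA : A) (εB : B)
    (hεA_sa : star εA = εA) (hεA_sq : εA * εA = 1)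
    (hεB_sa : star εB = εB) (hεB_sq : εB * εB = 1)
    (φ : A →ₐ[ℂ] B)
    (hcontr : ∀ x : A, ‖φ x‖ ≤ ‖x‖)
    (hsuper : ∀ x : A, φ (εA * star x * εA) = εB * star (φ x) * εB) :
    (∀ x : A, φ (star x) = star (φ x)) ∧
    (∀ x : A, φ (εA * x * εA) = εB * φ x * εB) :=
  lemma1_contractive_superinvolutive_hom_is_graded_general εA εB φ hcontr hsuper
end

section
/- Let A be a unital C*-algebra, ε ∈ A a grading operator (selfadjoint unitary), p = (1+ε)/2 and q = (1−ε)/2, and let ω = a·p + b·q where a, b ∈ ℂ with |a| = |b| = 1 (so ω is a unitary element of the commutative C*-subalgebra generated by 1 and ε). Then for x ∈ A the following are equivalent: (i) x is ω-hermitian of norm at most one, i.e. x = ω x* ω and ‖x‖ ≤ 1; (ii) for every t ∈ ℝ one has ‖x − i·t·ω‖ ≤ √(1 + t²). (Lemma 2.) -/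
/-!
Since `ε` is a grading, `p = (1 + ε)/2` is a projection and `ω = a p + b (1 - p)` is unitary.
With `y = ω* x`, `x` is `ω`-hermitian iff `y` is selfadjoint, and `‖x - i t ω‖ = ‖y - i t‖`.
In the C*-algebra order, `‖y - i t‖² ≤ 1 + t²` says
`(y - i t)* (y - i t) = y* y - 2 t ℑy + t² ≤ 1 + t²`, i.e. `y* y - 2 t ℑy ≤ 1`.
For all real `t` this forces `ℑy = 0`, and at `t = 0` it is `‖y‖ ≤ 1`.
-/

open Complex ComplexStarModule

section StarProjection

variable {A : Type*} [Ring A] [StarRing A] [Algebra ℂ A] [StarModule ℂ A]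

lemma IsStarProjection.smul_add_smul_one_sub_mem_unitary {p : A} (hp : IsStarProjection p)
    {a b : ℂ} (ha : ‖a‖ = 1) (hb : ‖b‖ = 1) : a • p + b • (1 - p) ∈ unitary A := by
  have hpq : p * (1 - p) = 0 := hp.mul_one_sub_self
  have hqp : (1 - p) * p = 0 := hp.one_sub_mul_self
  have hq : (1 - p) * (1 - p) = 1 - p := hp.one_sub.isIdempotentElem.eq
  have hpp : p * p = p := hp.isIdempotentElem.eq
  have hsp : star p = p := hp.isSelfAdjoint.star_eq
  have hsq : star (1 - p) = 1 - p := hp.one_sub.isSelfAdjoint.star_eq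
  have ha' : star a * a = 1 := by simp [Complex.conj_mul', ha]
  have hb' : star b * b = 1 := by simp [Complex.conj_mul', hb]
  rw [Unitary.mem_iff]
  simp only [star_add, star_smul, hsp, hsq, add_mul, mul_add, smul_mul_smul_comm, hpq, hqp, hq,
    hpp, smul_zero, add_zero, zero_add]
  constructor
  · rw [ha', hb', one_smul, one_smul, add_sub_cancel]
  · rw [mul_comm a, mul_comm b, ha', hb', one_smul, one_smul, add_sub_cancel]

lemma isStarProjection_half_smul_one_add {ε : A} (hε : IsSelfAdjoint ε) (hε2 : ε * ε = 1) :
    IsStarProjection ((2⁻¹ : ℂ) • (1 + ε)) where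
  isIdempotentElem := by
    rw [IsIdempotentElem, smul_mul_smul_comm, add_mul, mul_add, mul_add, hε2, one_mul, mul_one,
      one_mul]
    match_scalars <;> norm_num
  isSelfAdjoint :=
    (show IsSelfAdjoint (2⁻¹ : ℂ) by simp [IsSelfAdjoint]).smul ((IsSelfAdjoint.one A).add hε)

end StarProjection

section Unitary

variable {R : Type*} [Monoid R] [StarMul R]

lemma eq_mul_star_mul_iff_isSelfAdjoint_star_mul {u : R} (hu : u ∈ unitary R) (x : R) :
    x = u * star x * u ↔ IsSelfAdjoint (star u * x) := by
  rw [IsSelfAdjoint, star_mul, star_star, mul_assoc]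
  constructor
  · intro h
    conv_rhs => rw [h]
    rw [← mul_assoc, Unitary.star_mul_self_of_mem hu, one_mul]
  · intro h
    rw [h, ← mul_assoc, Unitary.mul_star_self_of_mem hu, one_mul]

end Unitary

section CStarAlgebra

variable {A : Type*} [CStarAlgebra A]

lemma star_mul_self_sub_I_mul_smul_one (y : A) (t : ℝ) :
    star (y - (I * t) • (1 : A)) * (y - (I * t) • (1 : A)) =
      star y * y - (2 * t) • (ℑ y : A) + algebraMap ℝ A (t ^ 2) := by
  have hconj : star (I * t) = -(I * t) := by simp
  rw [imaginaryPart_apply_coe, Algebra.algebraMap_eq_smul_one, star_sub, star_smul, hconj,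
    star_one]
  simp only [sub_mul, mul_sub, smul_mul_assoc, mul_smul_comm, one_mul, mul_one,
    ← Complex.coe_smul, smul_smul, smul_sub]
  match_scalars <;> ring_nf
  simp only [I_sq]
  ring

section Order

variable [PartialOrder A] [StarOrderedRing A]

lemma norm_le_sqrt_iff_star_mul_self_le (z : A) {r : ℝ} (hr : 0 ≤ r) :
    ‖z‖ ≤ √r ↔ star z * z ≤ algebraMap ℝ A r := by
  rw [Real.le_sqrt (norm_nonneg z) hr, sq, ← CStarRing.norm_star_mul_self,
    CStarAlgebra.norm_le_iff_le_algebraMap _ hr (star_mul_self_nonneg z)]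

lemma IsSelfAdjoint.eq_zero_of_forall_smul_le_one {k : A} (hk : IsSelfAdjoint k)
    (h : ∀ s : ℝ, s • k ≤ 1) : k = 0 := by
  refine CFC.eq_zero_of_spectrum_subset_zero (R := ℝ) k fun μ hμ => ?_
  rw [Set.mem_singleton_iff]
  by_contra hμ0
  let s : ℝˣ := Units.mk0 (2 / μ) (by positivity)
  have hsμ : (s : ℝ) • μ ∈ spectrum ℝ ((s : ℝ) • k) := spectrum.smul_mem_smul_iff.mpr hμ
  have hsk : (s : ℝ) • k ≤ algebraMap ℝ A 1 := by rw [map_one]; exact h s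
  have h2 := (le_algebraMap_iff_spectrum_le ((IsSelfAdjoint.all (s : ℝ)).smul hk)).mp hsk _ hsμ
  rw [smul_eq_mul, Units.val_mk0, div_mul_cancel₀ _ hμ0] at h2
  norm_num at h2

lemma isSelfAdjoint_and_norm_le_one_iff_forall_smul_imaginaryPart_le (y : A) :
    IsSelfAdjoint y ∧ ‖y‖ ≤ 1 ↔ ∀ s : ℝ, star y * y + s • (ℑ y : A) ≤ 1 := by
  have hnorm : ‖y‖ ≤ 1 ↔ star y * y ≤ 1 := by
    simpa using norm_le_sqrt_iff_star_mul_self_le y zero_le_one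
  constructor
  · rintro ⟨hy, hy1⟩ s
    simpa [hy.imaginaryPart] using hnorm.mp hy1
  · intro h
    refine ⟨imaginaryPart_eq_zero_iff.mp ?_, hnorm.mpr (by simpa using h 0)⟩
    ext1
    refine (ℑ y).2.eq_zero_of_forall_smul_le_one fun s => ?_
    calc s • (ℑ y : A) ≤ star y * y + s • (ℑ y : A) :=
          le_add_of_nonneg_left (star_mul_self_nonneg y)
      _ ≤ 1 := h s

end Order

lemma isSelfAdjoint_and_norm_le_one_iff (y : A) :
    IsSelfAdjoint y ∧ ‖y‖ ≤ 1 ↔ ∀ t : ℝ, ‖y - (I * t) • (1 : A)‖ ≤ √(1 + t ^ 2) := by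
  let _ := CStarAlgebra.spectralOrder A
  have := CStarAlgebra.spectralOrderedRing A
  have hstep (t : ℝ) :
      ‖y - (I * t) • (1 : A)‖ ≤ √(1 + t ^ 2) ↔ star y * y + (-2 * t) • (ℑ y : A) ≤ 1 := by
    rw [norm_le_sqrt_iff_star_mul_self_le _ (by positivity), star_mul_self_sub_I_mul_smul_one,
      map_add, map_one, add_le_add_iff_right, neg_mul, neg_smul, sub_eq_add_neg]
  simp_rw [hstep, isSelfAdjoint_and_norm_le_one_iff_forall_smul_imaginaryPart_le]
  refine ⟨fun h t => h _, fun h s => ?_⟩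
  simpa [mul_div_cancel₀] using h (-s / 2)

lemma isSelfAdjoint_star_mul_and_norm_le_one_iff {u : A} (hu : u ∈ unitary A) (x : A) :
    IsSelfAdjoint (star u * x) ∧ ‖x‖ ≤ 1 ↔ ∀ t : ℝ, ‖x - (I * t) • u‖ ≤ √(1 + t ^ 2) := by
  have hx : u * (star u * x) = x := by rw [← mul_assoc, Unitary.mul_star_self_of_mem hu, one_mul]
  have hnorm : ‖star u * x‖ = ‖x‖ := by rw [← CStarRing.norm_mem_unitary_mul _ hu, hx]
  have hdist (t : ℝ) : x - (I * t) • u = u * (star u * x - (I * t) • 1) := by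
    rw [mul_sub, hx, mul_smul_comm, mul_one]
  simp_rw [← hnorm, hdist, CStarRing.norm_mem_unitary_mul _ hu]
  exact isSelfAdjoint_and_norm_le_one_iff _

end CStarAlgebra

/-- **Lemma 2.** Let `A` be a unital C*-algebra, `ε ∈ A` a grading operator (selfadjoint
unitary), `p = (1+ε)/2`, `q = (1−ε)/2`, and `ω = a•p + b•q` with `a b : ℂ` of modulus one
(so `ω` is a unitary of the commutative C*-subalgebra generated by `1` and `ε`).  Then
`x` is `ω`-hermitian of norm at most one (`x = ω x* ω` and `‖x‖ ≤ 1`) if and only if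
`‖x − i t ω‖ ≤ √(1 + t²)` for every real `t`. -/
theorem lemma2_omega_hermitian_iff_norm_bound
    {A : Type*} [CStarAlgebra A]
    (ε : A) (hε_sa : star ε = ε) (hε_sq : ε * ε = 1)
    (a b : ℂ) (ha : ‖a‖ = 1) (hb : ‖b‖ = 1)
    (ω : A) (hω : ω = a • ((2⁻¹ : ℂ) • (1 + ε)) + b • ((2⁻¹ : ℂ) • (1 - ε)))
    (x : A) :
    (x = ω * star x * ω ∧ ‖x‖ ≤ 1) ↔
    (∀ t : ℝ, ‖x - (Complex.I * (t : ℂ)) • ω‖ ≤ Real.sqrt (1 + t ^ 2)) := by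
  have hq : (2⁻¹ : ℂ) • (1 - ε) = 1 - (2⁻¹ : ℂ) • (1 + ε) := by module
  have hω_unitary : ω ∈ unitary A := by
    rw [hω, hq]
    exact (isStarProjection_half_smul_one_add hε_sa hε_sq).smul_add_smul_one_sub_mem_unitary ha hb
  rw [eq_mul_star_mul_iff_isSelfAdjoint_star_mul hω_unitary,
    isSelfAdjoint_star_mul_and_norm_le_one_iff hω_unitary]
end

section
/- Let A be a unital C*-algebra with a grading automorphism α (a *-algebra automorphism of A with α ∘ α = id). For x ∈ A write x₀ = (x + α(x))/2 and x₁ = (x − α(x))/2 for the even and odd parts. Fix ω, μ ∈ ℂ with |ω| = 1 and μ² = ω, and define the ω-twisted product x *_ω y := x₀y₀ + ω·x₁y₁ + x₀y₁ + x₁y₀. Then the ℂ-linear map ι_ω(x) := x₀ + μ·x₁ is bijective, satisfies ι_ω(1) = 1, and satisfies ι_ω(x *_ω y) = ι_ω(x)·ι_ω(y) for all x, y ∈ A; in particular the twisted product *_ω is associative with unit 1. (Fibrewise content of Proposition 2, the Moebius strip over a graded C*-algebra.) -/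
variable {A : Type*} [CStarAlgebra A]

/-- The even part `x₀ = (x + α x)/2` of `x` with respect to a grading automorphism `α`. -/
noncomputable def gradedEvenPart (α : A → A) (x : A) : A := (2⁻¹ : ℂ) • (x + α x)

/-- The odd part `x₁ = (x − α x)/2` of `x` with respect to a grading automorphism `α`. -/
noncomputable def gradedOddPart (α : A → A) (x : A) : A := (2⁻¹ : ℂ) • (x - α x)

/-- The `ω`-twisted product `x *_ω y = x₀y₀ + ω·x₁y₁ + x₀y₁ + x₁y₀`. -/
noncomputable def twistedMul (α : A → A) (ω : ℂ) (x y : A) : A :=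
  gradedEvenPart α x * gradedEvenPart α y + ω • (gradedOddPart α x * gradedOddPart α y) +
    gradedEvenPart α x * gradedOddPart α y + gradedOddPart α x * gradedEvenPart α y

/-- The renormalization map `ι_ω(x) = x₀ + μ·x₁`, where `μ² = ω`. -/
noncomputable def twistedIota (α : A → A) (μ : ℂ) (x : A) : A :=
  gradedEvenPart α x + μ • gradedOddPart α x

section aux
variable (α : A →⋆ₐ[ℂ] A)

lemma evenPart_of_even {a : A} (h : α a = a) : gradedEvenPart (α : A → A) a = a := by
  rw [gradedEvenPart, h, ← two_smul ℂ a, smul_smul]; norm_num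

lemma oddPart_of_even {a : A} (h : α a = a) : gradedOddPart (α : A → A) a = 0 := by
  simp [gradedOddPart, h]

lemma evenPart_of_odd {a : A} (h : α a = -a) : gradedEvenPart (α : A → A) a = 0 := by
  simp [gradedEvenPart, h]

lemma oddPart_of_odd {a : A} (h : α a = -a) : gradedOddPart (α : A → A) a = a := by
  rw [gradedOddPart, h, sub_neg_eq_add, ← two_smul ℂ a, smul_smul]; norm_num

lemma alpha_evenPart (hα : ∀ x, α (α x) = x) (x : A) : α (gradedEvenPart (α : A → A) x) = gradedEvenPart (α : A → A) x := by
  simp [gradedEvenPart, map_smul, map_add, hα, add_comm]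

lemma alpha_oddPart (hα : ∀ x, α (α x) = x) (x : A) : α (gradedOddPart (α : A → A) x) = -gradedOddPart (α : A → A) x := by
  simp [gradedOddPart, map_smul, map_sub, hα]; rw [← smul_neg, neg_sub]

lemma evenPart_add (x y : A) :
    gradedEvenPart (α : A → A) (x + y)
      = gradedEvenPart (α : A → A) x + gradedEvenPart (α : A → A) y := by
  simp only [gradedEvenPart, map_add, ← smul_add]
  congr 1; abel

lemma oddPart_add (x y : A) :
    gradedOddPart (α : A → A) (x + y)
      = gradedOddPart (α : A → A) x + gradedOddPart (α : A → A) y := by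
  simp only [gradedOddPart, map_add, ← smul_add]
  congr 1; abel

lemma evenPart_smul (c : ℂ) (x : A) :
    gradedEvenPart (α : A → A) (c • x) = c • gradedEvenPart (α : A → A) x := by
  simp only [gradedEvenPart, map_smul, ← smul_add, smul_smul, mul_comm]

lemma oddPart_smul (c : ℂ) (x : A) :
    gradedOddPart (α : A → A) (c • x) = c • gradedOddPart (α : A → A) x := by
  simp only [gradedOddPart, map_smul, ← smul_sub, smul_smul, mul_comm]

lemma parts_add (x : A) : gradedEvenPart (α : A → A) x + gradedOddPart (α : A → A) x = x := by
  rw [gradedEvenPart, gradedOddPart, ← smul_add]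
  rw [show x + α x + (x - α x) = (2:ℂ) • x by rw [two_smul]; abel, smul_smul]
  norm_num

lemma iota_map_mul (hα : ∀ x, α (α x) = x) (ω μ : ℂ) (hμ : μ ^ 2 = ω) (x y : A) :
    twistedIota (α : A → A) μ (twistedMul (α : A → A) ω x y) =
      twistedIota (α : A → A) μ x * twistedIota (α : A → A) μ y := by
  have hμμ : μ * μ = ω := by rw [← hμ]; ring
  set x0 := gradedEvenPart (α : A → A) x
  set x1 := gradedOddPart (α : A → A) x
  set y0 := gradedEvenPart (α : A → A) y
  set y1 := gradedOddPart (α : A → A) y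
  have e00 : α (x0 * y0) = x0 * y0 := by rw [map_mul, alpha_evenPart α hα, alpha_evenPart α hα]
  have e11 : α (x1 * y1) = x1 * y1 := by
    rw [map_mul, alpha_oddPart α hα, alpha_oddPart α hα, neg_mul_neg]
  have o01 : α (x0 * y1) = -(x0 * y1) := by
    rw [map_mul, alpha_evenPart α hα, alpha_oddPart α hα, mul_neg]
  have o10 : α (x1 * y0) = -(x1 * y0) := by
    rw [map_mul, alpha_oddPart α hα, alpha_evenPart α hα, neg_mul]
  rw [twistedIota, twistedMul]
  rw [evenPart_add, evenPart_add, evenPart_add, oddPart_add, oddPart_add, oddPart_add,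
    evenPart_smul, oddPart_smul,
    evenPart_of_even α e00, evenPart_of_even α e11, evenPart_of_odd α o01, evenPart_of_odd α o10,
    oddPart_of_even α e00, oddPart_of_even α e11, oddPart_of_odd α o01, oddPart_of_odd α o10]
  show x0 * y0 + ω • (x1 * y1) + 0 + 0 + μ • (0 + ω • 0 + x0 * y1 + x1 * y0)
      = (x0 + μ • x1) * (y0 + μ • y1)
  simp only [mul_add, add_mul, smul_add, smul_zero, add_zero, zero_add, smul_mul_assoc,
    mul_smul_comm, smul_smul, hμμ]
  abel

end aux

/-- **Proposition 2 (fibrewise content: the Moebius strip over a graded C*-algebra).**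
Let `A` be a unital C*-algebra with grading automorphism `α` (a *-algebra automorphism with
`α ∘ α = id`), let `ω, μ ∈ ℂ` with `|ω| = 1` and `μ² = ω`.  Then `ι_ω(x) = x₀ + μ x₁` is a
bijective unital map intertwining the `ω`-twisted product with the original product; in
particular the twisted product is associative with unit `1`. -/
theorem prop2_twisted_product_moebius
    (α : A →⋆ₐ[ℂ] A) (hα : ∀ x, α (α x) = x)
    (ω μ : ℂ) (hω : ‖ω‖ = 1) (hμ : μ ^ 2 = ω) :
    Function.Bijective (twistedIota (α : A → A) μ) ∧
    twistedIota (α : A → A) μ 1 = 1 ∧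
    (∀ x y : A, twistedIota (α : A → A) μ (twistedMul (α : A → A) ω x y) =
        twistedIota (α : A → A) μ x * twistedIota (α : A → A) μ y) ∧
    (∀ x y z : A, twistedMul (α : A → A) ω (twistedMul (α : A → A) ω x y) z =
        twistedMul (α : A → A) ω x (twistedMul (α : A → A) ω y z)) ∧
    (∀ x : A, twistedMul (α : A → A) ω 1 x = x ∧ twistedMul (α : A → A) ω x 1 = x) := by
  have hμ0 : μ ≠ 0 := by
    intro h; rw [h] at hμ; simp [← hμ] at hω
  -- inverse map
  have hinv : Function.LeftInverse (twistedIota (α : A → A) μ⁻¹) (twistedIota (α : A → A) μ)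
      ∧ Function.RightInverse (twistedIota (α : A → A) μ⁻¹) (twistedIota (α : A → A) μ) := by
    constructor <;> intro x <;>
    · have hx0 := alpha_evenPart α hα x
      have hx1 := alpha_oddPart α hα x
      rw [twistedIota, twistedIota, evenPart_add, oddPart_add, evenPart_smul, oddPart_smul,
        evenPart_of_even α hx0, oddPart_of_even α hx0, evenPart_of_odd α hx1, oddPart_of_odd α hx1]
      rw [smul_zero, add_zero, zero_add, smul_smul]
      first
      | rw [inv_mul_cancel₀ hμ0, one_smul, parts_add α]
      | rw [mul_inv_cancel₀ hμ0, one_smul, parts_add α]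
  have hbij : Function.Bijective (twistedIota (α : A → A) μ) :=
    ⟨hinv.1.injective, hinv.2.surjective⟩
  have h1 : twistedIota (α : A → A) μ 1 = 1 := by
    rw [twistedIota, evenPart_of_even α (map_one α), oddPart_of_even α (map_one α),
      smul_zero, add_zero]
  have hmul := iota_map_mul α hα ω μ hμ
  refine ⟨hbij, h1, hmul, ?_, ?_⟩
  · intro x y z
    apply hbij.injective
    rw [hmul, hmul, hmul, hmul, mul_assoc]
  · intro x
    constructor <;> apply hbij.injective <;> rw [hmul, h1]
    · rw [one_mul]
    · rw [mul_one]
end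

section
/- Let H be a complex Hilbert space and ε a selfadjoint unitary bounded operator on H (the grading operator). For a bounded operator x on H let x₀ = (x + εxε)/2 and x₁ = (x − εxε)/2. Then the following are equivalent: (i) the operator ι(x) := x₀ + i·x₁ is a positive operator (that is, 0 ≤ ι(x) in the C*-order on B(H)); (ii) for every ξ ∈ H, the number ⟨x₀ ξ, ξ⟩ + ⟨x₁ ξ, ε ξ⟩ is a nonnegative real. (Characterization of superpositive operators.) -/
/-!
With `u = 1 + iε` one has `u† = 1 - iε`, and because `x₀` commutes and `x₁` anticommutes with
`ε`, the operators `ι(x) = x₀ + i x₁` and `c = x₀ + ε x₁` are conjugate up to the factor `2`: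
`u† ι(x) u = 2c` and `u c u† = 2ι(x)`. Conjugation preserves positivity, so `ι(x) ≥ 0` iff
`c ≥ 0`, and `⟨c ξ, ξ⟩ = ⟨x₀ ξ, ξ⟩ + ⟨x₁ ξ, ε ξ⟩` since `ε` is selfadjoint.
-/

open scoped ComplexOrder

open Complex ContinuousLinearMap

theorem ContinuousLinearMap.isPositive_iff_inner_nonneg_complex {H : Type*}
    [NormedAddCommGroup H] [InnerProductSpace ℂ H] (T : H →L[ℂ] H) :
    T.IsPositive ↔ ∀ ξ, 0 ≤ inner ℂ (T ξ) ξ := by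
  simp only [isPositive_iff_complex, Complex.nonneg_iff, Complex.ext_iff, RCLike.re_to_complex,
    ofReal_re, ofReal_im, eq_comm (a := (0 : ℝ)), true_and, and_comm]

theorem ContinuousLinearMap.isPositive_iff_of_adjoint_conj {𝕜 E : Type*} [RCLike 𝕜]
    [NormedAddCommGroup E] [InnerProductSpace 𝕜 E] [CompleteSpace E] {a c u : E →L[𝕜] E}
    (hac : adjoint u * a * u = (2 : 𝕜) • c) (hca : u * c * adjoint u = (2 : 𝕜) • a) :
    a.IsPositive ↔ c.IsPositive := by
  have h_half : (0 : 𝕜) ≤ 2⁻¹ := by simp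
  constructor
  · intro ha
    have := (ha.adjoint_conj u).smul_of_nonneg h_half
    rwa [← mul_def, ← mul_def, ← mul_assoc, hac, smul_smul, inv_mul_cancel₀ two_ne_zero,
      one_smul] at this
  · intro hc
    have := (hc.conj_adjoint u).smul_of_nonneg h_half
    rwa [← mul_def, ← mul_def, ← mul_assoc, hca, smul_smul, inv_mul_cancel₀ two_ne_zero,
      one_smul] at this

section Grading

variable {A : Type*} [Ring A] [Algebra ℂ A]

noncomputable def evenPart (ε x : A) : A := (2⁻¹ : ℂ) • (x + ε * x * ε)

noncomputable def oddPart (ε x : A) : A := (2⁻¹ : ℂ) • (x - ε * x * ε)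

variable {ε : A}

theorem mul_evenPart (hε : ε * ε = 1) (x : A) : ε * evenPart ε x = evenPart ε x * ε := by
  simp only [evenPart, mul_smul_comm, smul_mul_assoc, mul_add, add_mul, ← mul_assoc, hε, one_mul]
  simp only [mul_assoc, hε, mul_one, add_comm]

theorem mul_oddPart (hε : ε * ε = 1) (x : A) : ε * oddPart ε x = -(oddPart ε x * ε) := by
  simp only [oddPart, mul_smul_comm, smul_mul_assoc, mul_sub, sub_mul, ← mul_assoc, hε, one_mul]
  simp only [mul_assoc, hε, mul_one, neg_sub, ← smul_neg]

theorem sub_I_smul_mul_mul_add_I_smul {x₀ x₁ : A} (hε : ε * ε = 1) (h₀ : ε * x₀ = x₀ * ε)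
    (h₁ : ε * x₁ = -(x₁ * ε)) :
    (1 - I • ε) * (x₀ + I • x₁) * (1 + I • ε) = (2 : ℂ) • (x₀ + ε * x₁) := by
  have hε' : ∀ y : A, y * ε * ε = y := fun y => by rw [mul_assoc, hε, mul_one]
  simp only [mul_add, add_mul, sub_mul, smul_mul_assoc, mul_smul_comm, one_mul, mul_one, h₀, h₁,
    hε', neg_mul, smul_neg]
  match_scalars <;> ring_nf <;> norm_num [I_sq]

theorem add_I_smul_mul_mul_sub_I_smul {x₀ x₁ : A} (hε : ε * ε = 1) (h₀ : ε * x₀ = x₀ * ε)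
    (h₁ : ε * x₁ = -(x₁ * ε)) :
    (1 + I • ε) * (x₀ + ε * x₁) * (1 - I • ε) = (2 : ℂ) • (x₀ + I • x₁) := by
  have hε' : ∀ y : A, y * ε * ε = y := fun y => by rw [mul_assoc, hε, mul_one]
  simp only [mul_add, add_mul, mul_sub, smul_mul_assoc, mul_smul_comm, one_mul, mul_one,
    ← mul_assoc, h₀, h₁, hε', neg_mul, mul_neg, smul_neg]
  match_scalars <;> ring_nf <;> norm_num [I_sq]

end Grading

theorem IsSelfAdjoint.star_one_add_I_smul {A : Type*} [Ring A] [StarRing A] [Algebra ℂ A]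
    [StarModule ℂ A] {ε : A} (hε : IsSelfAdjoint ε) : star (1 + I • ε) = 1 - I • ε := by
  rw [star_add, star_one, star_smul, hε.star_eq, Complex.star_def, conj_I, neg_smul,
    sub_eq_add_neg]

/-- **Characterization of superpositive operators.**  Let `ε` be a selfadjoint unitary on a
complex Hilbert space `H` and `x` a bounded operator with even part `x₀ = (x + εxε)/2` and
odd part `x₁ = (x − εxε)/2`.  Then `ι(x) = x₀ + i·x₁` is a positive operator if and only if
`⟨x₀ ξ, ξ⟩ + ⟨x₁ ξ, ε ξ⟩` is a nonnegative real for every `ξ ∈ H`. -/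
theorem superpositive_iff_inner_nonneg
    {H : Type*} [NormedAddCommGroup H] [InnerProductSpace ℂ H] [CompleteSpace H]
    (ε : H →L[ℂ] H) (hε_sa : IsSelfAdjoint ε) (hε_sq : ε * ε = 1)
    (x : H →L[ℂ] H) :
    ((2⁻¹ : ℂ) • (x + ε * x * ε) + Complex.I • ((2⁻¹ : ℂ) • (x - ε * x * ε))).IsPositive ↔
    (∀ ξ : H, 0 ≤ ((inner ℂ (((2⁻¹ : ℂ) • (x + ε * x * ε)) ξ) ξ : ℂ) +
        (inner ℂ (((2⁻¹ : ℂ) • (x - ε * x * ε)) ξ) (ε ξ) : ℂ))) := by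
  change (evenPart ε x + I • oddPart ε x).IsPositive ↔
    ∀ ξ, 0 ≤ inner ℂ (evenPart ε x ξ) ξ + inner ℂ (oddPart ε x ξ) (ε ξ)
  have h_inner (ξ : H) : inner ℂ (evenPart ε x ξ) ξ + inner ℂ (oddPart ε x ξ) (ε ξ) =
      inner ℂ ((evenPart ε x + ε * oddPart ε x) ξ) ξ := by
    rw [add_apply, inner_add_left, ← adjoint_inner_left, hε_sa.adjoint_eq]
    rfl
  have h_adj : adjoint (1 + I • ε) = 1 - I • ε := by
    rw [← star_eq_adjoint, hε_sa.star_one_add_I_smul]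
  simp_rw [h_inner, ← isPositive_iff_inner_nonneg_complex]
  have h₀ := mul_evenPart hε_sq x
  have h₁ := mul_oddPart hε_sq x
  exact isPositive_iff_of_adjoint_conj
    (h_adj ▸ sub_I_smul_mul_mul_add_I_smul hε_sq h₀ h₁)
    (h_adj ▸ add_I_smul_mul_mul_sub_I_smul hε_sq h₀ h₁)
end

section
/- Let H be a complex Hilbert space and ε a selfadjoint unitary bounded operator on H. Then for every bounded operator x on H, the supremum over pairs (ξ, η) ∈ H × H with ‖ξ‖² + ‖η‖² ≤ 1 of |⟨x η, ε ξ⟩| equals ‖x‖ / 2. (This is the claim that for a concretely represented operator space the matrix norm recovered from the strong matrix norm via ‖x‖ = 2·‖[[0,x],[0,0]]‖^s coincides with the operator norm.) -/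
/-!
Cauchy–Schwarz and `2ab ≤ a² + b²` bound `|⟨x η, ξ⟩|` by `‖x‖/2` when `‖ξ‖² + ‖η‖² ≤ 1`, and for
a unit vector `η` the pair `ξ = x η / (√2 ‖x η‖)`, `η / √2` gives the value `‖x η‖/2`, so the
supremum is `‖x‖/2`. As `ε` is selfadjoint, `⟨x η, ε ξ⟩ = ⟨ε x η, ξ⟩`, and as it is moreover an
involution it is unitary, so `‖ε x‖ = ‖x‖`.
-/

open scoped InnerProductSpace

namespace ContinuousLinearMap

variable {𝕜 E F : Type*} [RCLike 𝕜] [NormedAddCommGroup E] [InnerProductSpace 𝕜 E]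
  [NormedAddCommGroup F] [InnerProductSpace 𝕜 F]

theorem norm_inner_apply_le_half_opNorm (x : E →L[𝕜] F) {ξ : F} {η : E}
    (h : ‖ξ‖ ^ 2 + ‖η‖ ^ 2 ≤ 1) : ‖⟪x η, ξ⟫_𝕜‖ ≤ ‖x‖ / 2 := by
  have amgm : ‖η‖ * ‖ξ‖ ≤ 1 / 2 := by nlinarith [sq_nonneg (‖ξ‖ - ‖η‖)]
  calc ‖⟪x η, ξ⟫_𝕜‖ ≤ ‖x η‖ * ‖ξ‖ := norm_inner_le_norm _ _
    _ ≤ ‖x‖ * ‖η‖ * ‖ξ‖ := by gcongr; exact x.le_opNorm η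
    _ = ‖x‖ * (‖η‖ * ‖ξ‖) := mul_assoc ..
    _ ≤ ‖x‖ * (1 / 2) := by gcongr
    _ = ‖x‖ / 2 := by ring

theorem exists_norm_inner_apply_eq_half_norm (x : E →L[𝕜] F) {η : E} (hη : ‖η‖ = 1) :
    ∃ ξ' η', ‖ξ'‖ ^ 2 + ‖η'‖ ^ 2 ≤ 1 ∧ ‖⟪x η', ξ'⟫_𝕜‖ = ‖x η‖ / 2 := by
  set c : 𝕜 := (((√2)⁻¹ : ℝ) : 𝕜)
  have hc : ‖c‖ ^ 2 = 1 / 2 := by simp [c]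
  have hinv : ‖(‖x η‖⁻¹ : 𝕜)‖ = ‖x η‖⁻¹ := by simp
  refine ⟨(c * (‖x η‖⁻¹ : 𝕜)) • x η, c • η, ?_, ?_⟩
  · have hξ' : ‖(c * (‖x η‖⁻¹ : 𝕜)) • x η‖ ≤ ‖c‖ := by
      rw [norm_smul, norm_mul, hinv, mul_assoc]
      exact mul_le_of_le_one_right (norm_nonneg c) (inv_mul_le_one_of_le₀ le_rfl (norm_nonneg _))
    rw [norm_smul c η, hη, mul_one]
    nlinarith [norm_nonneg ((c * (‖x η‖⁻¹ : 𝕜)) • x η)]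
  · rw [map_smul, inner_smul_left, inner_smul_right, inner_self_eq_norm_sq_to_K]
    simp only [norm_mul, RCLike.norm_conj, norm_pow, hinv, RCLike.norm_ofReal, abs_norm]
    calc ‖c‖ * (‖c‖ * ‖x η‖⁻¹ * ‖x η‖ ^ 2) = ‖c‖ ^ 2 * (‖x η‖⁻¹ * ‖x η‖ * ‖x η‖) := by ring
      _ = ‖x η‖ / 2 := by rw [hc, inv_mul_mul_self]; ring

theorem sSup_norm_inner_apply (x : E →L[𝕜] F) :
    sSup {r : ℝ | ∃ ξ η, ‖ξ‖ ^ 2 + ‖η‖ ^ 2 ≤ 1 ∧ r = ‖⟪x η, ξ⟫_𝕜‖} = ‖x‖ / 2 := by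
  have zero_mem : (0 : ℝ) ∈ {r : ℝ | ∃ ξ η, ‖ξ‖ ^ 2 + ‖η‖ ^ 2 ≤ 1 ∧ r = ‖⟪x η, ξ⟫_𝕜‖} :=
    ⟨0, 0, by simp, by simp⟩
  refine IsLUB.csSup_eq ⟨?_, fun b hb => ?_⟩ ⟨0, zero_mem⟩
  · rintro r ⟨ξ, η, h, rfl⟩
    exact x.norm_inner_apply_le_half_opNorm h
  · have hb_nonneg : 0 ≤ b := hb zero_mem
    have : ‖x‖ ≤ 2 * b := x.opNorm_le_of_unit_norm (by positivity) fun η hη => by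
      obtain ⟨ξ', η', h, heq⟩ := x.exists_norm_inner_apply_eq_half_norm hη
      have := hb ⟨ξ', η', h, heq.symm⟩
      linarith
    linarith

end ContinuousLinearMap

/-- **The matrix norm recovered from the strong matrix norm.**  Let `ε` be a selfadjoint
unitary on a complex Hilbert space `H`.  For any bounded operator `x`, the strong norm of
the block `[[0, x], [0, 0]]` on `H ⊕ H` (graded by `ε ⊕ ε`), i.e. the supremum over
`‖ξ‖² + ‖η‖² ≤ 1` of `|⟨x η, ε ξ⟩|`, equals `‖x‖ / 2`. -/
theorem strong_norm_of_corner_block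
    {H : Type*} [NormedAddCommGroup H] [InnerProductSpace ℂ H] [CompleteSpace H]
    (ε : H →L[ℂ] H) (hε_sa : IsSelfAdjoint ε) (hε_sq : ε * ε = 1)
    (x : H →L[ℂ] H) :
    sSup {r : ℝ | ∃ ξ η : H, ‖ξ‖ ^ 2 + ‖η‖ ^ 2 ≤ 1 ∧
        r = ‖(inner ℂ (x η) (ε ξ) : ℂ)‖} = ‖x‖ / 2 := by
  have hε_unitary : ε ∈ unitary (H →L[ℂ] H) :=
    Unitary.mem_iff.mpr (by simp [hε_sa.star_eq, hε_sq])
  have inner_eq : ∀ ξ η, inner ℂ (x η) (ε ξ) = inner ℂ ((ε * x) η) ξ := fun ξ η =>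
    (hε_sa.isSymmetric (x η) ξ).symm
  simp_rw [inner_eq, (ε * x).sSup_norm_inner_apply, CStarRing.norm_mem_unitary_mul x hε_unitary]
end

section
/- Let α, β be complex numbers and γ a nonnegative real number. If |β| ≤ |α| and |Re(β)| ≤ |Re(α)|, then max(|β + γ|, |β − γ|) ≤ max(|α + γ|, |α − γ|). (Elementary inequality underlying the proof of the Strong Lemma, relating really strong contractivity to strong contractivity.) -/
/-! Expanding, `‖z ± γ‖² = ‖z‖² ± 2γ Re z + γ²`, so the larger of the two squares is
`‖z‖² + 2γ |Re z| + γ²`, which is monotone in both `‖z‖` and `|Re z|` when `γ ≥ 0`. -/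

namespace Complex

lemma sq_norm_add_ofReal (z : ℂ) (r : ℝ) : ‖z + r‖ ^ 2 = ‖z‖ ^ 2 + 2 * r * z.re + r ^ 2 := by
  simp only [← normSq_eq_norm_sq, normSq_apply, add_re, add_im, ofReal_re, ofReal_im]
  ring

lemma sq_norm_sub_ofReal (z : ℂ) (r : ℝ) : ‖z - r‖ ^ 2 = ‖z‖ ^ 2 - 2 * r * z.re + r ^ 2 := by
  simp only [← normSq_eq_norm_sq, normSq_apply, sub_re, sub_im, ofReal_re, ofReal_im]
  ring

lemma sq_max_norm_add_sub_ofReal (z : ℂ) {r : ℝ} (hr : 0 ≤ r) :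
    max ‖z + r‖ ‖z - r‖ ^ 2 = ‖z‖ ^ 2 + 2 * r * |z.re| + r ^ 2 := by
  rcases le_total 0 z.re with hz | hz
  · have hle : ‖z - r‖ ≤ ‖z + r‖ := by
      rw [← sq_le_sq₀ (norm_nonneg _) (norm_nonneg _), sq_norm_add_ofReal, sq_norm_sub_ofReal]
      nlinarith
    rw [max_eq_left hle, sq_norm_add_ofReal, abs_of_nonneg hz]
  · have hle : ‖z + r‖ ≤ ‖z - r‖ := by
      rw [← sq_le_sq₀ (norm_nonneg _) (norm_nonneg _), sq_norm_add_ofReal, sq_norm_sub_ofReal]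
      nlinarith
    rw [max_eq_right hle, sq_norm_sub_ofReal, abs_of_nonpos hz]
    ring

end Complex

/-- **Elementary inequality underlying the Strong Lemma.**  If `α, β ∈ ℂ` and `γ ≥ 0` is
real, with `|β| ≤ |α|` and `|Re β| ≤ |Re α|`, then
`max (|β + γ|, |β − γ|) ≤ max (|α + γ|, |α − γ|)`. -/
theorem max_abs_add_sub_mono
    (α β : ℂ) (γ : ℝ) (hγ : 0 ≤ γ)
    (habs : ‖β‖ ≤ ‖α‖)
    (hre : |β.re| ≤ |α.re|) :
    max ‖β + (γ : ℂ)‖ ‖β - (γ : ℂ)‖ ≤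
      max ‖α + (γ : ℂ)‖ ‖α - (γ : ℂ)‖ := by
  rw [← sq_le_sq₀ (by positivity) (by positivity), Complex.sq_max_norm_add_sub_ofReal β hγ,
    Complex.sq_max_norm_add_sub_ofReal α hγ]
  gcongr
end

section
/- Let A be a unital C*-algebra and ε ∈ A a grading operator (selfadjoint unitary). Suppose U ∈ A is a superunitary, i.e. U·(ε U* ε) = 1 and (ε U* ε)·U = 1, where * is the C*-involution. Then ‖U‖ ≥ 1, and ‖U‖ = 1 holds if and only if U is an ordinary unitary of even degree, i.e. U* U = 1, U U* = 1 and ε U ε = U. -/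
private lemma aux_pos_inv_eq_one {A : Type*} [CStarAlgebra A]
    [PartialOrder A] [StarOrderedRing A]
    (x y : A) (hxy : x * y = 1) (hyx : y * x = 1)
    (hx : 0 ≤ x) (hy : 0 ≤ y) (hnx : ‖x‖ ≤ 1) (hny : ‖y‖ ≤ 1) : x = 1 := by
  set xu : Aˣ := ⟨x, y, hxy, hyx⟩ with hxu
  have hx1 : x ≤ 1 := (CStarAlgebra.norm_le_one_iff_of_nonneg x hx).mp hnx
  have hy1 : y ≤ 1 := (CStarAlgebra.norm_le_one_iff_of_nonneg y hy).mp hny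
  have h1y : 1 ≤ (↑xu⁻¹ : A) := (CStarAlgebra.one_le_inv_iff_le_one hx).mpr hx1
  have hyeq : y = 1 := le_antisymm hy1 h1y
  have : x = x * y := by rw [hyeq, mul_one]
  rw [this, hxy]

/-- **Norms of superunitaries.**  Let `A` be a unital C*-algebra with grading operator `ε`
(a selfadjoint unitary) and let `U` be a superunitary, i.e. `U Uˢ = Uˢ U = 1` for the
superinvolution `Uˢ = ε U* ε`.  Then `‖U‖ ≥ 1`, and `‖U‖ = 1` holds if and only if `U` is
an ordinary unitary of even degree (`U* U = U U* = 1` and `ε U ε = U`). -/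
theorem superunitary_norm_ge_one
    {A : Type*} [CStarAlgebra A] [Nontrivial A]
    (ε : A) (hε_sa : star ε = ε) (hε_sq : ε * ε = 1)
    (U : A)
    (hU₁ : U * (ε * star U * ε) = 1) (hU₂ : (ε * star U * ε) * U = 1) :
    1 ≤ ‖U‖ ∧
    (‖U‖ = 1 ↔ (star U * U = 1 ∧ U * star U = 1 ∧ ε * U * ε = U)) := by
  letI := CStarAlgebra.spectralOrder A
  haveI := CStarAlgebra.spectralOrderedRing A
  set V : A := ε * star U * ε with hV
  have hsV : star V = ε * U * ε := by
    simp [hV, star_mul, hε_sa, mul_assoc]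
  have hεn : ‖ε‖ = 1 := by
    have h := CStarRing.norm_star_mul_self (x := ε)
    rw [hε_sa, hε_sq, norm_one] at h
    rcases mul_self_eq_one_iff.mp h.symm with h' | h'
    · exact h'
    · nlinarith [norm_nonneg ε]
  have hVn : ‖V‖ ≤ ‖U‖ := by
    have h1 : ‖ε * star U * ε‖ ≤ ‖ε * star U‖ * ‖ε‖ := norm_mul_le _ _
    have h2 : ‖ε * star U‖ ≤ ‖ε‖ * ‖star U‖ := norm_mul_le _ _
    rw [hεn] at h1
    rw [hεn, norm_star] at h2
    calc ‖V‖ ≤ ‖ε * star U‖ * 1 := h1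
      _ = ‖ε * star U‖ := mul_one _
      _ ≤ 1 * ‖U‖ := h2
      _ = ‖U‖ := one_mul _
  have hge : 1 ≤ ‖U‖ := by
    have h2 : ‖U * V‖ ≤ ‖U‖ * ‖V‖ := norm_mul_le _ _
    rw [hU₁, norm_one] at h2
    nlinarith [norm_nonneg U, norm_nonneg V]
  refine ⟨hge, ?_, ?_⟩
  · -- forward direction
    intro hn1
    have hVn1 : ‖V‖ ≤ 1 := hVn.trans_eq hn1
    have e1 : star U * U * (V * star V) = 1 := by
      have : star U * U * (V * star V) = star U * (U * V) * star V := by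
        simp only [mul_assoc]
      rw [this, hU₁, mul_one, ← star_mul, hU₂, star_one]
    have e2 : V * star V * (star U * U) = 1 := by
      have : V * star V * (star U * U) = V * star (U * V) * U := by
        rw [star_mul U V]; simp only [mul_assoc]
      rw [this, hU₁, star_one, mul_one, hU₂]
    have n1 : ‖star U * U‖ ≤ 1 := by
      have h := norm_mul_le (star U) U
      rw [norm_star, hn1] at h
      simpa using h
    have n2 : ‖V * star V‖ ≤ 1 := by
      have h := norm_mul_le V (star V)
      rw [norm_star] at h
      nlinarith [norm_nonneg V]
    have key1 : star U * U = 1 :=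
      aux_pos_inv_eq_one (star U * U) (V * star V) e1 e2
        (star_mul_self_nonneg U) (mul_star_self_nonneg V) n1 n2
    have e3 : U * star U * (star V * V) = 1 := by
      have : U * star U * (star V * V) = U * star (V * U) * V := by
        rw [star_mul V U]; simp only [mul_assoc]
      rw [this, hU₂, star_one, mul_one, hU₁]
    have e4 : star V * V * (U * star U) = 1 := by
      have : star V * V * (U * star U) = star V * (V * U) * star U := by
        simp only [mul_assoc]
      rw [this, hU₂, mul_one, ← star_mul, hU₁, star_one]
    have n3 : ‖U * star U‖ ≤ 1 := by
      have h := norm_mul_le U (star U)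
      rw [norm_star, hn1] at h
      simpa using h
    have n4 : ‖star V * V‖ ≤ 1 := by
      have h := norm_mul_le (star V) V
      rw [norm_star] at h
      nlinarith [norm_nonneg V]
    have key2 : U * star U = 1 :=
      aux_pos_inv_eq_one (U * star U) (star V * V) e3 e4
        (mul_star_self_nonneg U) (star_mul_self_nonneg V) n3 n4
    have hUV : star U = V := by
      have h1 : star U = star U * (U * V) := by rw [hU₁, mul_one]
      have h2 : star U * (U * V) = (star U * U) * V := by simp only [mul_assoc]
      rw [h1, h2, key1, one_mul]
    have heven : ε * U * ε = U := by
      have := congrArg star hUV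
      rw [star_star, hsV] at this
      exact this.symm
    exact ⟨key1, key2, heven⟩
  · rintro ⟨h1, -, -⟩
    have h := CStarRing.norm_star_mul_self (x := U)
    rw [h1, norm_one] at h
    nlinarith [norm_nonneg U]
end
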